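/- Let ν > 0, λ > 0, and let u, f : ℝ² → ℝ² and p : ℝ² → ℝ be smooth and 2π-periodic with div u = 0, div f = 0, −Δf = λf, and suppose u is a steady solution of the forced Navier–Stokes equations: −νΔu + (u·∇)u + ∇p = f. Then ∫_Q |Δu|² dx = λ ∫_Q |∇u|² dx, where Q = [0,2π]² is the period cell. -/

import Mathlib

open MeasureTheory Filter Topology Real Set
open scoped RealInnerProductSpace
noncomputable section

/-- The plane, with its Euclidean structure. -/
abbrev E2 : Type := EuclideanSpace ℝ (Fin 2)

/-- Partial derivative `∂ᵢ g` at `x`. -/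
def pd (i : Fin 2) (g : E2 → ℝ) (x : E2) : ℝ := fderiv ℝ g x (EuclideanSpace.single i 1)

/-- Laplacian `Δ g` at `x`. -/
def lap (g : E2 → ℝ) (x : E2) : ℝ := ∑ i : Fin 2, pd i (pd i g) x

/-- Perpendicular gradient `∇^⊥ψ = (−∂₂ψ, ∂₁ψ)`. -/
def gradPerp (ψ : E2 → ℝ) (x : E2) : Fin 2 → ℝ := ![-(pd 1 ψ x), pd 0 ψ x]

/-- The period cell `Q = [0,2π]²`. -/
def Q2 : Set E2 := {x : E2 | x 0 ∈ Set.Icc 0 (2 * π) ∧ x 1 ∈ Set.Icc 0 (2 * π)}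

/-- A function on `ℝ²` is `2π`-periodic if it is invariant under translation by
`2π eᵢ`, `i = 1,2`. -/
def Per2 {α : Type*} (v : E2 → α) : Prop :=
  ∀ (x : E2) (i : Fin 2), v (x + (2 * π) • EuclideanSpace.single i 1) = v x

/-!
Pair the equation with `u` and with `Δu` and integrate over the period cell, where integration
by parts produces no boundary terms. Against `u`, the transport and pressure terms integrate to
zero because `div u = 0`, leaving `∫ u·f = ν ∫ |∇u|²`. Against `Δu`, the pressure term becomes
`∫ u·∇(Δp) = 0`, and the transport term vanishes in two dimensions: one integration by parts turns
it into `∑ ∂ₖuᵢ ∂ₖuⱼ ∂ⱼuᵢ`, which is zero pointwise because `∇u` is a traceless `2 × 2` matrix, plus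
another transport term. As `∫ Δu·f = ∫ u·Δf = -λ ∫ u·f`, this gives
`ν ∫ |Δu|² = λ ∫ u·f = λ ν ∫ |∇u|²`.
-/

open scoped ContDiff

def planeEquiv : (ℝ × ℝ) ≃L[ℝ] E2 :=
  (ContinuousLinearEquiv.finTwoArrow ℝ ℝ).symm.trans (EuclideanSpace.equiv (Fin 2) ℝ).symm

lemma measurePreserving_planeEquiv : MeasurePreserving planeEquiv :=
  (PiLp.volume_preserving_toLp (Fin 2)).comp (volume_preserving_finTwoArrow ℝ).symm

lemma planeEquiv_preimage_Q2 : planeEquiv ⁻¹' Q2 = Icc (0, 0) (2 * π, 2 * π) := by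
  ext z
  simp [planeEquiv, Q2, Prod.le_def]
  tauto

lemma isCompact_Q2 : IsCompact Q2 := by
  rw [← planeEquiv.surjective.image_preimage Q2, planeEquiv_preimage_Q2]
  exact isCompact_Icc.image planeEquiv.continuous

lemma integrableOn_Q2 {F : E2 → ℝ} (hF : Continuous F) : IntegrableOn F Q2 :=
  hF.continuousOn.integrableOn_compact isCompact_Q2

lemma ContDiff.integrableOn_Q2 {n : WithTop ℕ∞} {F : E2 → ℝ} (hF : ContDiff ℝ n F) :
    IntegrableOn F Q2 :=
  _root_.integrableOn_Q2 hF.continuous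

lemma setIntegral_Q2_eq (F : E2 → ℝ) :
    ∫ x in Q2, F x = ∫ z in Icc (0, 0) (2 * π, 2 * π), F (planeEquiv z) := by
  rw [← planeEquiv_preimage_Q2, measurePreserving_planeEquiv.setIntegral_preimage_emb
    planeEquiv.toHomeomorph.measurableEmbedding]

lemma planeEquiv_one_zero : planeEquiv (1, 0) = EuclideanSpace.single 0 1 := by
  ext i; fin_cases i <;> simp [planeEquiv]

lemma planeEquiv_zero_one : planeEquiv (0, 1) = EuclideanSpace.single 1 1 := by
  ext i; fin_cases i <;> simp [planeEquiv]

lemma planeEquiv_two_pi_left (b : ℝ) :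
    planeEquiv (2 * π, b) = planeEquiv (0, b) + (2 * π) • EuclideanSpace.single 0 1 := by
  ext i; fin_cases i <;> simp [planeEquiv]

lemma planeEquiv_two_pi_right (a : ℝ) :
    planeEquiv (a, 2 * π) = planeEquiv (a, 0) + (2 * π) • EuclideanSpace.single 1 1 := by
  ext i; fin_cases i <;> simp [planeEquiv]

section Calculus

variable {g h : E2 → ℝ}

@[fun_prop]
lemma ContDiff.pd (hg : ContDiff ℝ ∞ g) (i : Fin 2) : ContDiff ℝ ∞ (pd i g) :=
  (hg.fderiv_right (by simp)).clm_apply contDiff_const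

@[fun_prop]
lemma ContDiff.lap (hg : ContDiff ℝ ∞ g) : ContDiff ℝ ∞ (lap g) := by
  unfold _root_.lap; fun_prop

lemma Per2.pd (hg : Per2 g) (i : Fin 2) : Per2 (pd i g) := by
  intro x j
  simp only [_root_.pd, ← fderiv_comp_add_right, hg _ j]

lemma Per2.lap (hg : Per2 g) : Per2 (lap g) := by
  intro x j
  simp only [_root_.lap, ((hg.pd _).pd _) x j]

lemma Per2.apply {ι α : Type*} {u : E2 → ι → α} (hu : Per2 u) (i : ι) : Per2 (u · i) :=
  fun x j => congrFun (hu x j) i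

lemma pd_mul {x : E2} (hg : DifferentiableAt ℝ g x) (hh : DifferentiableAt ℝ h x) (i : Fin 2) :
    pd i (fun y => g y * h y) x = pd i g x * h x + g x * pd i h x := by
  simp [_root_.pd, fderiv_fun_mul hg hh]
  ring

lemma pd_sum {ι : Type*} {s : Finset ι} {G : ι → E2 → ℝ} {x : E2}
    (hG : ∀ k ∈ s, DifferentiableAt ℝ (G k) x) (i : Fin 2) :
    pd i (fun y => ∑ k ∈ s, G k y) x = ∑ k ∈ s, pd i (G k) x := by
  simp [_root_.pd, fderiv_fun_sum hG]

lemma pd_pd_eq_fderiv_fderiv {x : E2} (hg : DifferentiableAt ℝ (fderiv ℝ g) x) (i j : Fin 2) :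
    pd i (pd j g) x = fderiv ℝ (fderiv ℝ g) x (EuclideanSpace.single i 1)
      (EuclideanSpace.single j 1) := by
  change fderiv ℝ (fun y => fderiv ℝ g y (EuclideanSpace.single j 1)) x _ = _
  simp [fderiv_clm_apply hg (differentiableAt_const _)]

lemma pd_comm (hg : ContDiff ℝ 2 g) (i j : Fin 2) : pd i (pd j g) = pd j (pd i g) := by
  ext x
  have hd : DifferentiableAt ℝ (fderiv ℝ g) x :=
    (hg.fderiv_right (m := 1) le_rfl).differentiable one_ne_zero x
  rw [pd_pd_eq_fderiv_fderiv hd, pd_pd_eq_fderiv_fderiv hd]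
  exact (hg.contDiffAt.isSymmSndFDerivAt (by simp)).eq _ _

lemma pd_lap (hg : ContDiff ℝ ∞ g) (i : Fin 2) : pd i (lap g) = lap (pd i g) := by
  ext x
  have hlap : lap g = fun y => ∑ k, pd k (pd k g) y := rfl
  rw [hlap, pd_sum (fun k _ => ((hg.pd k).pd k).differentiable (by simp) x)]
  refine Finset.sum_congr rfl fun k _ => ?_
  rw [pd_comm (contDiff_infty.1 (hg.pd k) 2) i k, pd_comm (contDiff_infty.1 hg 2) i k]

end Calculus

section Integration

variable {g h : E2 → ℝ}

lemma continuous_pd {n : WithTop ℕ∞} (hg : ContDiff ℝ n g) (hn : n ≠ 0) (i : Fin 2) :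
    Continuous (pd i g) :=
  (hg.continuous_fderiv hn).clm_apply continuous_const

/-- The divergence theorem on `Q2`, whose boundary terms cancel by periodicity. -/
lemma integral_pd_zero_add_pd_one_eq_zero (hg : ContDiff ℝ 1 g) (hh : ContDiff ℝ 1 h)
    (hgp : Per2 g) (hhp : Per2 h) :
    ∫ x in Q2, (pd 0 g x + pd 1 h x) = 0 := by
  have hderiv {φ : E2 → ℝ} (hφ : ContDiff ℝ 1 φ) (z : ℝ × ℝ) :
      HasFDerivAt (φ ∘ planeEquiv)
        ((fderiv ℝ φ (planeEquiv z)).comp (planeEquiv : (ℝ × ℝ) →L[ℝ] E2)) z :=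
    ((hφ.differentiable one_ne_zero).differentiableAt.hasFDerivAt).comp z planeEquiv.hasFDerivAt
  have hcont {φ : E2 → ℝ} (hφ : ContDiff ℝ 1 φ) :
      ContinuousOn (φ ∘ planeEquiv) (Icc (0, 0) (2 * π, 2 * π)) :=
    (hφ.continuous.comp planeEquiv.continuous).continuousOn
  have hg' := hg.continuous_fderiv one_ne_zero
  have hh' := hh.continuous_fderiv one_ne_zero
  have hdiv := integral_divergence_prod_Icc_of_hasFDerivAt_of_le (g ∘ planeEquiv) (h ∘ planeEquiv)
    _ _ (0, 0) (2 * π, 2 * π) (by simp [Prod.le_def, pi_pos.le]) (hcont hg) (hcont hh)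
    (fun z _ => hderiv hg z) (fun z _ => hderiv hh z)
    (Continuous.continuousOn (by fun_prop) |>.integrableOn_compact isCompact_Icc)
  simp only [ContinuousLinearMap.comp_apply, ContinuousLinearEquiv.coe_coe,
    planeEquiv_one_zero, planeEquiv_zero_one, Function.comp_apply, planeEquiv_two_pi_left,
    planeEquiv_two_pi_right, hgp _ 0, hhp _ 1, sub_self, zero_add] at hdiv
  rw [setIntegral_Q2_eq]
  exact hdiv

lemma integral_pd_eq_zero (hg : ContDiff ℝ 1 g) (hgp : Per2 g) (i : Fin 2) :
    ∫ x in Q2, pd i g x = 0 := by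
  have hconst : ∀ j x, pd j (fun _ : E2 => (0 : ℝ)) x = 0 := by simp [pd]
  fin_cases i
  · simpa [hconst] using integral_pd_zero_add_pd_one_eq_zero (h := fun _ => 0)
      hg contDiff_const hgp (fun _ _ => rfl)
  · simpa [hconst] using integral_pd_zero_add_pd_one_eq_zero (g := fun _ => 0)
      contDiff_const hg (fun _ _ => rfl) hgp

lemma integral_pd_mul_eq_neg (hg : ContDiff ℝ 1 g) (hh : ContDiff ℝ 1 h) (hgp : Per2 g)
    (hhp : Per2 h) (i : Fin 2) :
    ∫ x in Q2, pd i g x * h x = -∫ x in Q2, g x * pd i h x := by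
  have hprod := integral_pd_eq_zero (hg.mul hh) (fun x j => by simp only [hgp x j, hhp x j]) i
  simp only [pd_mul (hg.differentiable one_ne_zero _) (hh.differentiable one_ne_zero _)] at hprod
  rw [integral_add (integrableOn_Q2 ((continuous_pd hg one_ne_zero i).fun_mul hh.continuous))
    (integrableOn_Q2 (hg.continuous.fun_mul (continuous_pd hh one_ne_zero i)))] at hprod
  linarith

lemma integral_lap_mul (hg : ContDiff ℝ ∞ g) (hh : ContDiff ℝ ∞ h) (hgp : Per2 g)
    (hhp : Per2 h) :
    ∫ x in Q2, lap g x * h x = -∫ x in Q2, ∑ k, pd k g x * pd k h x := by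
  simp only [lap, Finset.sum_mul]
  rw [integral_finsetSum _ fun k _ => ContDiff.integrableOn_Q2 (n := ∞) (by fun_prop),
    integral_finsetSum _ fun k _ => ContDiff.integrableOn_Q2 (n := ∞) (by fun_prop),
    ← Finset.sum_neg_distrib]
  exact Finset.sum_congr rfl fun k _ => integral_pd_mul_eq_neg (contDiff_infty.1 (hg.pd k) 1)
    (contDiff_infty.1 hh 1) (hgp.pd k) hhp k

lemma integral_sum_mul_pd_eq_zero {w : E2 → Fin 2 → ℝ} (hw : ContDiff ℝ 1 w)
    (hg : ContDiff ℝ 1 g) (hwp : Per2 w) (hgp : Per2 g) (hdiv : ∀ x, ∑ j, pd j (w · j) x = 0) :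
    ∫ x in Q2, ∑ j, w x j * pd j g x = 0 := by
  have hwj (j : Fin 2) : ContDiff ℝ 1 (w · j) := contDiff_pi.1 hw j
  have hprod (x : E2) : ∑ j, w x j * pd j g x = ∑ j, pd j (fun y => w y j * g y) x := by
    simp only [pd_mul ((hwj _).differentiable one_ne_zero x) (hg.differentiable one_ne_zero x),
      Finset.sum_add_distrib, ← Finset.sum_mul, hdiv x, zero_mul, zero_add]
  simp only [hprod]
  rw [integral_finsetSum _ fun j _ =>
    integrableOn_Q2 (continuous_pd ((hwj j).mul hg) one_ne_zero j)]
  exact Finset.sum_eq_zero fun j _ => integral_pd_eq_zero ((hwj j).mul hg)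
    (fun x k => by simp only [hwp.apply j x k, hgp x k]) j

end Integration

/-- A traceless `2 × 2` matrix squares to a scalar (Cayley–Hamilton), so `tr (A Aᵀ Aᵀ) = 0`. -/
lemma sum_mul_mul_eq_zero_of_sum_diag_eq_zero (A : Fin 2 → Fin 2 → ℝ) (hA : ∑ i, A i i = 0) :
    ∑ i, ∑ j, ∑ k, A i j * A k j * A i k = 0 := by
  simp only [Fin.sum_univ_two] at hA ⊢
  linear_combination (A 0 0 * A 0 0 + A 0 1 * A 0 1 + A 1 0 * A 1 0 + A 1 1 * A 1 1
    - A 0 0 * A 1 1 + A 0 1 * A 1 0) * hA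

section VectorFields

variable {u v : E2 → Fin 2 → ℝ}

lemma integral_sum_lap_mul (hu : ContDiff ℝ ∞ u) (hv : ContDiff ℝ ∞ v) (hup : Per2 u)
    (hvp : Per2 v) :
    ∫ x in Q2, ∑ i, lap (u · i) x * v x i
      = -∫ x in Q2, ∑ i, ∑ k, pd k (u · i) x * pd k (v · i) x := by
  rw [integral_finsetSum _ fun k _ => ContDiff.integrableOn_Q2 (n := ∞) (by fun_prop),
    integral_finsetSum _ fun k _ => ContDiff.integrableOn_Q2 (n := ∞) (by fun_prop),
    ← Finset.sum_neg_distrib]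
  exact Finset.sum_congr rfl fun i _ =>
    integral_lap_mul (contDiff_pi.1 hu i) (contDiff_pi.1 hv i) (hup.apply i) (hvp.apply i)

lemma integral_sum_lap_mul_eq_sum_mul_lap (hu : ContDiff ℝ ∞ u) (hv : ContDiff ℝ ∞ v)
    (hup : Per2 u) (hvp : Per2 v) :
    ∫ x in Q2, ∑ i, lap (u · i) x * v x i = ∫ x in Q2, ∑ i, u x i * lap (v · i) x := by
  simp_rw [mul_comm (u _ _), integral_sum_lap_mul hu hv hup hvp,
    integral_sum_lap_mul hv hu hvp hup, mul_comm (pd _ (u · _) _)]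

lemma integral_sum_mul_lap_self (hu : ContDiff ℝ ∞ u) (hup : Per2 u) :
    ∫ x in Q2, ∑ i, u x i * lap (u · i) x = -∫ x in Q2, ∑ i, ∑ k, pd k (u · i) x ^ 2 := by
  simp_rw [mul_comm (u _ _), integral_sum_lap_mul hu hu hup hup, sq]

variable (hu : ContDiff ℝ ∞ u) (hup : Per2 u) (hdiv : ∀ x, ∑ j, pd j (u · j) x = 0)
include hu hup hdiv

lemma integral_sum_mul_convect_self_eq_zero :
    ∫ x in Q2, ∑ i, u x i * ∑ j, u x j * pd j (u · i) x = 0 := by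
  have hpt (x : E2) : ∑ i, u x i * ∑ j, u x j * pd j (u · i) x
      = 2⁻¹ * ∑ j, u x j * pd j (fun y => ∑ i, u y i * u y i) x := by
    have hud : Differentiable ℝ u := hu.differentiable (by simp)
    simp (disch := (intros; fun_prop)) only [pd_sum, pd_mul]
    simp only [Fin.sum_univ_two]
    ring
  have hW : ContDiff ℝ ∞ fun y => ∑ i, u y i * u y i := by fun_prop
  simp only [hpt]
  rw [integral_const_mul, integral_sum_mul_pd_eq_zero (contDiff_infty.1 hu 1)
    (contDiff_infty.1 hW 1) hup (fun x k => by simp only [hup x k]) hdiv, mul_zero]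

lemma integral_sum_lap_mul_pd_eq_zero {p : E2 → ℝ} (hp : ContDiff ℝ ∞ p) (hpp : Per2 p) :
    ∫ x in Q2, ∑ i, lap (u · i) x * pd i p x = 0 := by
  set v : E2 → Fin 2 → ℝ := fun x i => pd i p x with hv_def
  have hv : ContDiff ℝ ∞ v := contDiff_pi.2 fun i => by fun_prop
  have hvp : Per2 v := fun x k => funext fun i => hpp.pd i x k
  show ∫ x in Q2, ∑ i, lap (u · i) x * v x i = 0
  rw [integral_sum_lap_mul_eq_sum_mul_lap hu hv hup hvp]
  simp only [hv_def, ← pd_lap hp]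
  exact integral_sum_mul_pd_eq_zero (contDiff_infty.1 hu 1) (contDiff_infty.1 hp.lap 1) hup
    hpp.lap hdiv

lemma integral_sum_lap_mul_convect_eq_zero :
    ∫ x in Q2, ∑ i, lap (u · i) x * ∑ j, u x j * pd j (u · i) x = 0 := by
  set N : E2 → Fin 2 → ℝ := fun x i => ∑ j, u x j * pd j (u · i) x
  have hN : ContDiff ℝ ∞ N := contDiff_pi.2 fun i => by fun_prop
  have hNp : Per2 N := fun x k => by ext i; simp only [N, hup x k, (hup.apply _).pd _ x k]
  set W : E2 → ℝ := fun y => ∑ i, ∑ k, pd k (u · i) y * pd k (u · i) y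
  have hW : ContDiff ℝ ∞ W := by fun_prop
  have hWp : Per2 W := fun x k => by simp only [W, (hup.apply _).pd _ x k]
  have hpt (x : E2) :
      ∑ i, ∑ k, pd k (u · i) x * pd k (N · i) x = 2⁻¹ * ∑ j, u x j * pd j W x := by
    have hud : Differentiable ℝ u := hu.differentiable (by simp)
    have hpd (i k : Fin 2) : Differentiable ℝ (pd k (u · i)) :=
      ((contDiff_pi.1 hu i).pd k).differentiable (by simp)
    have hcomm (i : Fin 2) : pd 1 (pd 0 (u · i)) = pd 0 (pd 1 (u · i)) :=
      pd_comm (contDiff_infty.1 (contDiff_pi.1 hu i) 2) 1 0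
    have hcubic := sum_mul_mul_eq_zero_of_sum_diag_eq_zero (fun i k => pd k (u · i) x) (hdiv x)
    simp (disch := (intros; fun_prop)) only [N, W, pd_sum, pd_mul]
    simp only [Fin.sum_univ_two, hcomm] at hcubic ⊢
    linear_combination hcubic
  show ∫ x in Q2, ∑ i, lap (u · i) x * N x i = 0
  rw [integral_sum_lap_mul hu hN hup hNp, neg_eq_zero]
  simp only [hpt]
  rw [integral_const_mul, integral_sum_mul_pd_eq_zero (contDiff_infty.1 hu 1)
    (contDiff_infty.1 hW 1) hup hWp hdiv, mul_zero]

end VectorFields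

lemma integral_sum_mul_eq_of_navierStokes {ν : ℝ} {u f v : E2 → Fin 2 → ℝ} {p : E2 → ℝ}
    (hu : ContDiff ℝ ∞ u) (hp : ContDiff ℝ ∞ p) (hv : ContDiff ℝ ∞ v)
    (heq : ∀ x i, -ν * lap (u · i) x + (∑ j, u x j * pd j (u · i) x) + pd i p x = f x i) :
    ∫ x in Q2, ∑ i, v x i * f x i
      = -ν * (∫ x in Q2, ∑ i, v x i * lap (u · i) x)
        + (∫ x in Q2, ∑ i, v x i * ∑ j, u x j * pd j (u · i) x)
        + ∫ x in Q2, ∑ i, v x i * pd i p x := by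
  have hpt (x : E2) : ∑ i, v x i * f x i
      = -ν * ∑ i, v x i * lap (u · i) x + ∑ i, v x i * ∑ j, u x j * pd j (u · i) x
        + ∑ i, v x i * pd i p x := by
    simp only [← heq, Fin.sum_univ_two]
    ring
  simp only [hpt]
  rw [integral_add, integral_add, integral_const_mul]
  all_goals apply ContDiff.integrableOn_Q2 (n := ∞); fun_prop

theorem stmt4_general (ν lam : ℝ) (hν : 0 < ν)
    (u f : E2 → Fin 2 → ℝ) (p : E2 → ℝ)
    (hu : ContDiff ℝ (⊤ : ℕ∞) u) (hf : ContDiff ℝ (⊤ : ℕ∞) f) (hp : ContDiff ℝ (⊤ : ℕ∞) p)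
    (huper : Per2 u) (hfper : Per2 f) (hpper : Per2 p)
    (hudiv : ∀ x, ∑ j : Fin 2, pd j (fun y => u y j) x = 0)
    (hfeig : ∀ x, ∀ i : Fin 2, -(lap (fun y => f y i) x) = lam * f x i)
    (heq : ∀ x, ∀ i : Fin 2,
      -ν * lap (fun y => u y i) x + (∑ j : Fin 2, u x j * pd j (fun y => u y i) x)
        + pd i p x = f x i) :
    ∫ x in Q2, ∑ i : Fin 2, (lap (fun y => u y i) x)^2
      = lam * ∫ x in Q2, ∑ i : Fin 2, ∑ j : Fin 2, (pd j (fun y => u y i) x)^2 := by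
  have hforcing :
      ∫ x in Q2, ∑ i, lap (u · i) x * f x i = -lam * ∫ x in Q2, ∑ i, u x i * f x i := by
    rw [integral_sum_lap_mul_eq_sum_mul_lap hu hf huper hfper, ← integral_const_mul]
    congr 1 with x
    simp only [Fin.sum_univ_two]
    linear_combination -u x 0 * hfeig x 0 - u x 1 * hfeig x 1
  have hpairLap := integral_sum_mul_eq_of_navierStokes (v := fun x i => lap (u · i) x) hu hp
    (contDiff_pi.2 fun i => by fun_prop) heq
  have hpairU := integral_sum_mul_eq_of_navierStokes hu hp hu heq
  rw [hforcing, integral_sum_lap_mul_convect_eq_zero hu huper hudiv,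
    integral_sum_lap_mul_pd_eq_zero hu huper hudiv hp hpper] at hpairLap
  rw [integral_sum_mul_lap_self hu huper, integral_sum_mul_convect_self_eq_zero hu huper hudiv,
    integral_sum_mul_pd_eq_zero (contDiff_infty.1 hu 1) (contDiff_infty.1 hp 1) huper hpper
      hudiv] at hpairU
  simp only [← sq] at hpairLap
  apply mul_left_cancel₀ hν.ne'
  linear_combination hpairLap + lam * hpairU

/-- If `u` is a smooth `2π`-periodic steady solution of the forced Navier–Stokes
equations `−νΔu + (u·∇)u + ∇p = f` with `div u = 0`, `div f = 0`, and Kolmogorov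
forcing `−Δf = λf`, then `∫_Q |Δu|² dx = λ ∫_Q |∇u|² dx`. -/
theorem stmt4 (ν lam : ℝ) (hν : 0 < ν) (hlam : 0 < lam)
    (u f : E2 → Fin 2 → ℝ) (p : E2 → ℝ)
    (hu : ContDiff ℝ (⊤ : ℕ∞) u) (hf : ContDiff ℝ (⊤ : ℕ∞) f) (hp : ContDiff ℝ (⊤ : ℕ∞) p)
    (huper : Per2 u) (hfper : Per2 f) (hpper : Per2 p)
    (hudiv : ∀ x, ∑ j : Fin 2, pd j (fun y => u y j) x = 0)
    (hfdiv : ∀ x, ∑ j : Fin 2, pd j (fun y => f y j) x = 0)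
    (hfeig : ∀ x, ∀ i : Fin 2, -(lap (fun y => f y i) x) = lam * f x i)
    (heq : ∀ x, ∀ i : Fin 2,
      -ν * lap (fun y => u y i) x + (∑ j : Fin 2, u x j * pd j (fun y => u y i) x)
        + pd i p x = f x i) :
    ∫ x in Q2, ∑ i : Fin 2, (lap (fun y => u y i) x)^2
      = lam * ∫ x in Q2, ∑ i : Fin 2, ∑ j : Fin 2, (pd j (fun y => u y i) x)^2 :=
  stmt4_general ν lam hν u f p hu hf hp huper hfper hpper hudiv hfeig heq
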